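/- arXiv:2106.01506 — 7 statements merged into one kernel-verified Lean document; each statement's English description precedes it below -/
import Mathlib

section
/- Let X ⊆ ℝ^{d_t} and Y ⊆ ℝ^{d_s} be compact sets, let F : X × Y → ℝ be continuous, and let ε > 0. Then there exist positive integers d and m, and for each ℓ = 1, …, d two-layer ReLU networks q_ℓ : ℝ^{d_t} → ℝ and k_ℓ : ℝ^{d_s} → ℝ with m hidden units each, i.e. functions of the form q_ℓ(t) = Σ_{i=1}^{m} a_{ℓ,i} · max(0, ⟨w_{ℓ,i}, t⟩ + b_{ℓ,i}) with a_{ℓ,i}, b_{ℓ,i} ∈ ℝ and w_{ℓ,i} ∈ ℝ^{d_t} (and analogously for k_ℓ with weight vectors in ℝ^{d_s}), such that |F(t, s) − Σ_{ℓ=1}^{d} q_ℓ(t)·k_ℓ(s)| < ε for all t ∈ X and s ∈ Y. -/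
open scoped RealInnerProductSpace

/-- A two-layer ReLU network with `m` hidden units on `ℝ^n`:
`t ↦ ∑ i, a i * max 0 (⟪w i, t⟫ + b i)`. -/
noncomputable def reluNet {n m : ℕ} (a b : Fin m → ℝ)
    (w : Fin m → EuclideanSpace ℝ (Fin n)) (t : EuclideanSpace ℝ (Fin n)) : ℝ :=
  ∑ i, a i * max 0 (⟪w i, t⟫ + b i)

/-!
The functions `(t, s) ↦ exp (⟪w, t⟫ + ⟪v, s⟫)` are closed under multiplication and separate
points, so by Stone–Weierstrass their span is dense in `C(X × Y, ℝ)`. Each of them is the product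
`exp ⟪w, t⟫ * exp ⟪v, s⟫` of two ridge functions, and a ridge function `φ ⟪w, t⟫` is uniformly
approximated on a bounded set by a ReLU network: on a uniform grid of `[-R, R]`, piecewise linear
interpolation of `φ` is a combination of hat functions, and each hat function is a combination of
four ReLU units. By continuity of the product, sums `∑ q ℓ t * k ℓ s` of products of networks are
therefore dense as well; padding with zero units and zero terms makes all widths equal.
-/

open Filter Set Submodule
open scoped Pointwise

def ramp (y : ℝ) : ℝ := max 0 y - max 0 (y - 1)

lemma ramp_eq (y : ℝ) : ramp y = max 0 (min y 1) := by
  unfold ramp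
  rcases le_total y 0 with h | h
  · rw [max_eq_left h, max_eq_left (by linarith), max_eq_left (min_le_of_left_le h)]; ring
  rcases le_total y 1 with h' | h'
  · rw [max_eq_right h, max_eq_left (by linarith), min_eq_left h', max_eq_right h, sub_zero]
  · rw [max_eq_right h, max_eq_right (by linarith), min_eq_right h', max_eq_right zero_le_one]
    ring

lemma ramp_mono : Monotone ramp := fun y z h => by
  simp only [ramp_eq]; gcongr

lemma ramp_of_nonpos {y : ℝ} (h : y ≤ 0) : ramp y = 0 := by
  simp [ramp_eq, min_eq_left (h.trans zero_le_one), h]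

lemma ramp_of_one_le {y : ℝ} (h : 1 ≤ y) : ramp y = 1 := by
  simp [ramp_eq, min_eq_right h]

/-- The hat function of height `1` supported on `[j - 1, j + 1]`. -/
def hat (j : ℕ) (u : ℝ) : ℝ := ramp (u - j + 1) - ramp (u - j)

lemma hat_nonneg (j : ℕ) (u : ℝ) : 0 ≤ hat j u :=
  sub_nonneg.2 (ramp_mono (by linarith))

lemma sum_hat {N : ℕ} {u : ℝ} (hu₀ : 0 ≤ u) (huN : u ≤ N) :
    ∑ j ∈ Finset.range (N + 1), hat j u = 1 := by
  have h := Finset.sum_range_sub' (fun j : ℕ => ramp (u - j + 1)) (N + 1)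
  simp only [Nat.cast_add, Nat.cast_one, Nat.cast_zero, sub_zero, sub_add_eq_sub_sub,
    sub_add_cancel] at h
  rw [ramp_of_one_le (by linarith), ramp_of_nonpos (by linarith)] at h
  simpa [hat] using h

lemma abs_sub_lt_one_of_hat_ne_zero {j : ℕ} {u : ℝ} (h : hat j u ≠ 0) : |u - j| < 1 := by
  contrapose! h
  rcases le_abs'.1 h with h | h
  · rw [hat, ramp_of_nonpos (by linarith), ramp_of_nonpos (by linarith), sub_zero]
  · rw [hat, ramp_of_one_le (by linarith), ramp_of_one_le h, sub_self]

lemma abs_sub_sum_mul_le {ι : Type*} (s : Finset ι) {e y : ι → ℝ} {x δ : ℝ}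
    (he : ∀ i ∈ s, 0 ≤ e i) (hsum : ∑ i ∈ s, e i = 1) (hy : ∀ i ∈ s, e i ≠ 0 → |x - y i| ≤ δ) :
    |x - ∑ i ∈ s, e i * y i| ≤ δ :=
  calc |x - ∑ i ∈ s, e i * y i| = |∑ i ∈ s, e i * (x - y i)| := by
        simp only [mul_sub, Finset.sum_sub_distrib, ← Finset.sum_mul, hsum, one_mul]
    _ ≤ ∑ i ∈ s, e i * |x - y i| := (Finset.abs_sum_le_sum_abs _ _).trans_eq <|
        Finset.sum_congr rfl fun i hi => by rw [abs_mul, abs_of_nonneg (he i hi)]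
    _ ≤ ∑ i ∈ s, e i * δ := Finset.sum_le_sum fun i hi => by
        rcases eq_or_ne (e i) 0 with h | h
        · simp [h]
        · exact mul_le_mul_of_nonneg_left (hy i hi h) (he i hi)
    _ = δ := by rw [← Finset.sum_mul, hsum, one_mul]

lemma abs_sub_sum_hat_mul_le {ψ : ℝ → ℝ} {N : ℕ} {δ : ℝ}
    (hψ : ∀ u ∈ Icc (0 : ℝ) N, ∀ v ∈ Icc (0 : ℝ) N, |u - v| ≤ 1 → |ψ u - ψ v| ≤ δ)
    {u : ℝ} (hu : u ∈ Icc (0 : ℝ) N) :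
    |ψ u - ∑ j ∈ Finset.range (N + 1), hat j u * ψ j| ≤ δ :=
  abs_sub_sum_mul_le _ (fun j _ => hat_nonneg j u) (sum_hat hu.1 hu.2) fun j hj hne =>
    hψ u hu j ⟨Nat.cast_nonneg j, by exact_mod_cast Finset.mem_range_succ_iff.1 hj⟩
      (abs_sub_lt_one_of_hat_ne_zero hne).le

section Neurons

variable {E : Type*} [NormedAddCommGroup E] [InnerProductSpace ℝ E]

def neuron (w : E) (b : ℝ) : C(E, ℝ) := ⟨fun t => max 0 (⟪w, t⟫ + b), by fun_prop⟩

@[simp] lemma neuron_apply (w : E) (b : ℝ) (t : E) : neuron w b t = max 0 (⟪w, t⟫ + b) := rfl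

variable (E) in
def reluNets : Submodule ℝ C(E, ℝ) := span ℝ (range fun p : E × ℝ => neuron p.1 p.2)

lemma neuron_mem_reluNets (w : E) (b : ℝ) : neuron w b ∈ reluNets E :=
  subset_span ⟨(w, b), rfl⟩

def hatNeuron (w : E) (b : ℝ) (j : ℕ) : C(E, ℝ) :=
  (neuron w (b - j + 1) - neuron w (b - j)) - (neuron w (b - j) - neuron w (b - j - 1))

lemma hatNeuron_apply (w : E) (b : ℝ) (j : ℕ) (t : E) :
    hatNeuron w b j t = hat j (⟪w, t⟫ + b) := by
  simp only [hatNeuron, hat, ramp, ContinuousMap.sub_apply, neuron_apply]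
  ring_nf

lemma hatNeuron_mem_reluNets (w : E) (b : ℝ) (j : ℕ) : hatNeuron w b j ∈ reluNets E := by
  unfold hatNeuron
  repeat' apply sub_mem
  all_goals exact neuron_mem_reluNets _ _

lemma exists_mem_reluNets_abs_sub_comp_inner_le {φ : ℝ → ℝ} (hφ : Continuous φ) (w : E)
    {X : Set E} (hX : Bornology.IsBounded X) {δ : ℝ} (hδ : 0 < δ) :
    ∃ g ∈ reluNets E, ∀ t ∈ X, |φ ⟪w, t⟫ - g t| ≤ δ := by
  obtain ⟨C, hC₀, hC⟩ := hX.exists_pos_norm_le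
  set R := ‖w‖ * C + 1
  have hR : 0 < R := by positivity
  have hwX : ∀ t ∈ X, |⟪w, t⟫| ≤ R := fun t ht =>
    calc |⟪w, t⟫| ≤ ‖w‖ * ‖t‖ := abs_real_inner_le_norm w t
      _ ≤ ‖w‖ * C := by gcongr; exact hC t ht
      _ ≤ R := le_add_of_nonneg_right zero_le_one
  obtain ⟨η, hη, hφη⟩ := Metric.uniformContinuousOn_iff_le.1
    (isCompact_Icc.uniformContinuousOn_of_continuous hφ.continuousOn) δ hδ
  obtain ⟨N, hN⟩ := exists_nat_ge (2 * R / η)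
  have hN₀ : (0 : ℝ) < N := (by positivity : 0 < 2 * R / η).trans_le hN
  set h := 2 * R / N
  have hh : 0 < h := by positivity
  have hhN : h * N = 2 * R := div_mul_cancel₀ _ hN₀.ne'
  have hhη : h ≤ η := by
    rw [div_le_iff₀ hN₀]; rw [div_le_iff₀ hη] at hN; linarith
  -- `φ` on the grid `-R + h * j`, `j = 0, …, N`, reparametrized to the grid `0, …, N`
  let ψ : ℝ → ℝ := fun u => φ (-R + h * u)
  have hψ : ∀ u ∈ Icc (0 : ℝ) N, ∀ v ∈ Icc (0 : ℝ) N, |u - v| ≤ 1 → |ψ u - ψ v| ≤ δ := by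
    have hmem : ∀ u ∈ Icc (0 : ℝ) N, -R + h * u ∈ Icc (-R) R := fun u hu =>
      ⟨by nlinarith [hu.1], by nlinarith [hu.2]⟩
    intro u hu v hv huv
    refine hφη _ (hmem u hu) _ (hmem v hv) ?_
    calc dist (-R + h * u) (-R + h * v) = h * |u - v| := by
          rw [Real.dist_eq, show -R + h * u - (-R + h * v) = h * (u - v) by ring, abs_mul,
            abs_of_pos hh]
      _ ≤ h * 1 := by gcongr
      _ ≤ η := by rwa [mul_one]
  refine ⟨∑ j ∈ Finset.range (N + 1), ψ j • hatNeuron (h⁻¹ • w) (R / h) j,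
    sum_mem fun j _ => smul_mem _ _ (hatNeuron_mem_reluNets _ _ _), fun t ht => ?_⟩
  have hu : ⟪h⁻¹ • w, t⟫ + R / h ∈ Icc (0 : ℝ) N := by
    have hwt := abs_le.1 (hwX t ht)
    rw [show ⟪h⁻¹ • w, t⟫ + R / h = (⟪w, t⟫ + R) / h by rw [real_inner_smul_left]; ring]
    exact ⟨div_nonneg (by linarith) hh.le, (div_le_iff₀ hh).2 (by linarith)⟩
  have hψu : ψ (⟪h⁻¹ • w, t⟫ + R / h) = φ ⟪w, t⟫ := by
    simp only [ψ, real_inner_smul_left]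
    congr 1; field_simp; ring
  simpa [hatNeuron_apply, hψu, mul_comm] using abs_sub_sum_hat_mul_le hψ hu

end Neurons

lemma Submodule.eventually_exists_fin_sum_eq {R M : Type*} [Semiring R] [AddCommMonoid M]
    [Module R M] {s : Set M} (hs : s.Nonempty) {x : M} (hx : x ∈ span R s) :
    ∀ᶠ n in atTop, ∃ (c : Fin n → R) (g : Fin n → s), ∑ i, c i • (g i : M) = x := by
  obtain ⟨n, c, g, rfl⟩ := mem_span_set'.1 hx
  filter_upwards [eventually_ge_atTop n] with N hN
  obtain ⟨k, rfl⟩ := Nat.exists_eq_add_of_le hN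
  exact ⟨Fin.append c 0, Fin.append g fun _ => ⟨_, hs.some_mem⟩, by simp [Fin.sum_univ_add]⟩

lemma eventually_exists_reluNet_eq {n : ℕ} {q : C(EuclideanSpace ℝ (Fin n), ℝ)}
    (hq : q ∈ reluNets _) :
    ∀ᶠ m in atTop, ∃ (a b : Fin m → ℝ) (w : Fin m → EuclideanSpace ℝ (Fin n)),
      ⇑q = reluNet a b w := by
  filter_upwards [eventually_exists_fin_sum_eq (range_nonempty _) hq] with m ⟨c, g, hg⟩
  choose p hp using fun i => (g i).2
  refine ⟨c, fun i => (p i).2, fun i => (p i).1, ?_⟩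
  ext t
  simp [← hg, reluNet, ← hp]

section StoneWeierstrass

variable {K : Type*} [TopologicalSpace K] [CompactSpace K]

noncomputable def expComp (f : C(K, ℝ)) : C(K, ℝ) := ⟨fun x => Real.exp (f x), by fun_prop⟩

lemma dense_span_expComp (S : AddSubmonoid C(K, ℝ)) (hS : ∀ x y, x ≠ y → ∃ f ∈ S, f x ≠ f y) :
    Dense ((span ℝ (expComp '' (S : Set C(K, ℝ))) : Submodule ℝ C(K, ℝ)) : Set C(K, ℝ)) := by
  set G := expComp '' (S : Set C(K, ℝ))
  have hGG : G * G ⊆ G := Set.mul_subset_iff.2 <| by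
    rintro _ ⟨f, hf, rfl⟩ _ ⟨g, hg, rfl⟩
    exact ⟨f + g, S.add_mem hf hg, by ext; simp [expComp, Real.exp_add]⟩
  let A := (span ℝ G).toSubalgebra (subset_span ⟨0, S.zero_mem, by ext; simp [expComp]⟩)
    fun x y hx hy => span_mono hGG (span_mul_span ℝ G G ▸ mul_mem_mul hx hy)
  have hA : A.SeparatesPoints := fun x y hxy => by
    obtain ⟨f, hf, hfxy⟩ := hS x y hxy
    exact ⟨_, ⟨expComp f, subset_span ⟨f, hf, rfl⟩, rfl⟩, by simpa [expComp] using hfxy⟩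
  change Dense (A : Set C(K, ℝ))
  rw [dense_iff_closure_eq, ← Subalgebra.topologicalClosure_coe,
    ContinuousMap.subalgebra_topologicalClosure_eq_top_of_separatesPoints A hA]
  rfl

end StoneWeierstrass

section Products

variable {α β : Type*} [TopologicalSpace α] [TopologicalSpace β]

def outerMul (g : C(α, ℝ)) (h : C(β, ℝ)) : C(α × β, ℝ) := g.comp .fst * h.comp .snd

lemma continuous_outerMul [LocallyCompactSpace α] [LocallyCompactSpace β] :
    Continuous (Function.uncurry (outerMul (α := α) (β := β))) :=
  ((ContinuousMap.continuous_precomp _).comp continuous_fst).mul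
    ((ContinuousMap.continuous_precomp _).comp continuous_snd)

end Products

section Density

variable {E F : Type*} [NormedAddCommGroup E] [InnerProductSpace ℝ E]
  [NormedAddCommGroup F] [InnerProductSpace ℝ F] {X : Set E} {Y : Set F}

lemma comp_inner_mem_closure_reluNets [CompactSpace X] {φ : ℝ → ℝ} (hφ : Continuous φ) (w : E) :
    (⟨fun t : X => φ ⟪w, (t : E)⟫, by fun_prop⟩ : C(X, ℝ)) ∈
      closure ((·.restrict X) '' (reluNets E : Set C(E, ℝ))) := by
  refine Metric.mem_closure_iff.2 fun ε hε => ?_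
  obtain ⟨g, hg, hgX⟩ := exists_mem_reluNets_abs_sub_comp_inner_le hφ w
    (isCompact_iff_compactSpace.2 ‹_›).isBounded (half_pos hε)
  refine ⟨g.restrict X, mem_image_of_mem _ hg, lt_of_le_of_lt ?_ (half_lt_self hε)⟩
  exact (ContinuousMap.dist_le (half_pos hε).le).2 fun t => hgX t t.2

lemma inner_sub_self_ne {x y : E} (h : x ≠ y) : ⟪x - y, x⟫ ≠ ⟪x - y, y⟫ := fun hxy =>
  h <| sub_eq_zero.1 <| (inner_self_eq_zero (𝕜 := ℝ)).1 <| by rw [inner_sub_right, hxy, sub_self]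

variable (X Y) in
def ridgeSums : AddSubmonoid C(X × Y, ℝ) where
  carrier := {f | ∃ (w : E) (v : F), ∀ p, f p = ⟪w, (p.1 : E)⟫ + ⟪v, (p.2 : F)⟫}
  add_mem' := by
    rintro _ _ ⟨w, v, hf⟩ ⟨w', v', hg⟩
    exact ⟨w + w', v + v', fun p => by
      simp only [ContinuousMap.add_apply, hf, hg, inner_add_left]; ring⟩
  zero_mem' := ⟨0, 0, fun p => by simp⟩

lemma ridgeSums_separates {p p' : X × Y} (h : p ≠ p') : ∃ f ∈ ridgeSums X Y, f p ≠ f p' := by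
  rcases ne_or_eq (p.1 : E) p'.1 with h₁ | h₁
  · exact ⟨⟨fun q => ⟪(p.1 - p'.1 : E), (q.1 : E)⟫, by fun_prop⟩,
      ⟨p.1 - p'.1, 0, fun q => by simp⟩, inner_sub_self_ne h₁⟩
  · have h₂ : (p.2 : F) ≠ p'.2 := fun h₂ => h (Prod.ext (Subtype.ext h₁) (Subtype.ext h₂))
    exact ⟨⟨fun q => ⟪(p.2 - p'.2 : F), (q.2 : F)⟫, by fun_prop⟩,
      ⟨0, p.2 - p'.2, fun q => by simp⟩, inner_sub_self_ne h₂⟩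

variable (X Y) in
/-- Sums `(t, s) ↦ ∑ ℓ, q ℓ t * k ℓ s` of products of ReLU networks, restricted to `X × Y`. -/
def reluNetTensors : Submodule ℝ C(X × Y, ℝ) :=
  span ℝ (image2 outerMul ((·.restrict X) '' (reluNets E : Set C(E, ℝ)))
    ((·.restrict Y) '' (reluNets F : Set C(F, ℝ))))

variable [CompactSpace X] [CompactSpace Y]

lemma dense_reluNetTensors : Dense (reluNetTensors X Y : Set C(X × Y, ℝ)) := by
  refine dense_closure.1 ((dense_span_expComp _ fun p p' => ridgeSums_separates).mono ?_)
  rw [← Submodule.topologicalClosure_coe]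
  refine span_le.2 ?_
  rintro _ ⟨f, ⟨w, v, hf⟩, rfl⟩
  have hf' : expComp f = outerMul ⟨fun t : X => Real.exp ⟪w, (t : E)⟫, by fun_prop⟩
      ⟨fun s : Y => Real.exp ⟪v, (s : F)⟫, by fun_prop⟩ := by
    ext p; simp [expComp, outerMul, hf, Real.exp_add]
  rw [hf', Submodule.topologicalClosure_coe]
  exact map_mem_closure₂ continuous_outerMul
    (comp_inner_mem_closure_reluNets Real.continuous_exp w)
    (comp_inner_mem_closure_reluNets Real.continuous_exp v)
    fun a ha b hb => subset_span (mem_image2_of_mem ha hb)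

lemma eventually_exists_sum_mul_near {f : E × F → ℝ} (hf : ContinuousOn f (X ×ˢ Y))
    {ε : ℝ} (hε : 0 < ε) :
    ∀ᶠ d in atTop, ∃ (q : Fin d → C(E, ℝ)) (k : Fin d → C(F, ℝ)),
      (∀ ℓ, q ℓ ∈ reluNets E) ∧ (∀ ℓ, k ℓ ∈ reluNets F) ∧
        ∀ t ∈ X, ∀ s ∈ Y, |f (t, s) - ∑ ℓ, q ℓ t * k ℓ s| < ε := by
  let f' : C(X × Y, ℝ) :=
    ⟨fun p => f (p.1, p.2), hf.comp_continuous (by fun_prop) fun p => ⟨p.1.2, p.2.2⟩⟩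
  obtain ⟨g, hg, hfg⟩ := dense_reluNetTensors.exists_dist_lt f' hε
  have hne : (image2 outerMul ((·.restrict X) '' (reluNets E : Set C(E, ℝ)))
      ((·.restrict Y) '' (reluNets F : Set C(F, ℝ)))).Nonempty :=
    (Set.image_nonempty.2 ⟨0, zero_mem _⟩).image2 (Set.image_nonempty.2 ⟨0, zero_mem _⟩)
  filter_upwards [eventually_exists_fin_sum_eq hne hg] with d ⟨c, G, hG⟩
  have hGqk : ∀ ℓ, ∃ q ∈ reluNets E, ∃ k ∈ reluNets F,
      ∀ p : X × Y, (G ℓ : C(X × Y, ℝ)) p = q p.1 * k p.2 := by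
    intro ℓ
    obtain ⟨_, ⟨q, hq, rfl⟩, _, ⟨k, hk, rfl⟩, h⟩ := (G ℓ).2
    exact ⟨q, hq, k, hk, fun p => by rw [← h]; rfl⟩
  choose q hq k hk hGqk using hGqk
  refine ⟨fun ℓ => c ℓ • q ℓ, k, fun ℓ => smul_mem _ _ (hq ℓ), hk, fun t ht s hs => ?_⟩
  have := (ContinuousMap.dist_lt_iff hε).1 hfg (⟨t, ht⟩, ⟨s, hs⟩)
  rw [← hG] at this
  simpa [f', Real.dist_eq, hGqk, mul_assoc] using this

end Density

theorem stmt_3 (dt ds : ℕ)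
    (X : Set (EuclideanSpace ℝ (Fin dt))) (Y : Set (EuclideanSpace ℝ (Fin ds)))
    (hX : IsCompact X) (hY : IsCompact Y)
    (F : EuclideanSpace ℝ (Fin dt) × EuclideanSpace ℝ (Fin ds) → ℝ)
    (hF : ContinuousOn F (X ×ˢ Y)) (ε : ℝ) (hε : 0 < ε) :
    ∃ d m : ℕ, 0 < d ∧ 0 < m ∧
      ∃ (aq bq : Fin d → Fin m → ℝ) (wq : Fin d → Fin m → EuclideanSpace ℝ (Fin dt))
        (ak bk : Fin d → Fin m → ℝ) (wk : Fin d → Fin m → EuclideanSpace ℝ (Fin ds)),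
        ∀ t ∈ X, ∀ s ∈ Y,
          |F (t, s) - ∑ ℓ, reluNet (aq ℓ) (bq ℓ) (wq ℓ) t * reluNet (ak ℓ) (bk ℓ) (wk ℓ) s| < ε := by
  have := isCompact_iff_compactSpace.1 hX
  have := isCompact_iff_compactSpace.1 hY
  obtain ⟨d, ⟨q, k, hq, hk, hqk⟩, hd⟩ :=
    ((eventually_exists_sum_mul_near hF hε).and (eventually_gt_atTop 0)).exists
  obtain ⟨m, hm, hqm, hkm⟩ := ((eventually_gt_atTop 0).and
    ((eventually_all.2 fun ℓ => eventually_exists_reluNet_eq (hq ℓ)).and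
      (eventually_all.2 fun ℓ => eventually_exists_reluNet_eq (hk ℓ)))).exists
  choose aq bq wq hqnet using hqm
  choose ak bk wk hknet using hkm
  refine ⟨d, m, hd, hm, aq, bq, wq, ak, bk, wk, fun t ht s hs => ?_⟩
  simpa only [← hqnet, ← hknet] using hqk t ht s hs
end

section
/- Let X ⊆ ℝ^{d_t} and Y ⊆ ℝ^{d_s} be compact sets, let F : X × Y → ℝ be a continuous function with F(t, s) > 0 for all t ∈ X, s ∈ Y, and let ε > 0. Then there exist positive integers d and m and two-layer ReLU networks q_ℓ : ℝ^{d_t} → ℝ and k_ℓ : ℝ^{d_s} → ℝ (ℓ = 1, …, d) with m hidden units each, such that |F(t, s) − exp((Σ_{ℓ=1}^{d} q_ℓ(t)·k_ℓ(s))/√d)| < ε for all t ∈ X and s ∈ Y. -/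
open scoped RealInnerProductSpace

/-!
Put `L = log F`. Exponential sums `∑ cᵢ exp (⟪wᵢ, t⟫ + ⟪vᵢ, s⟫)` are closed under products and
separate points, so by Stone–Weierstrass one of them is uniformly close to `L` on `X × Y`; each
of its terms is a product `(cᵢ exp ⟪wᵢ, t⟫) · exp ⟪vᵢ, s⟫` of ridge functions. A ridge function
`t ↦ φ ⟪w, t⟫` is uniformly approximated on a bounded set by the piecewise linear interpolant of
`φ`, a combination of hat functions, and a hat function is a combination of three ReLUs.
Scaling the query factors by `√d` and using the uniform continuity of `exp` on a compact interval
turns the approximation of `L` into one of `F = exp L`.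
-/

open Finset Filter Set

def tent (y : ℝ) : ℝ := max 0 (y + 1) - 2 * max 0 y + max 0 (y - 1)

lemma tent_nonneg (y : ℝ) : 0 ≤ tent y := by
  simp only [tent, max_def]
  split_ifs <;> linarith

lemma tent_eq_zero_of_one_le_abs {y : ℝ} (hy : 1 ≤ |y|) : tent y = 0 := by
  simp only [tent, max_def]
  rcases le_abs'.1 hy with h | h <;> split_ifs <;> linarith

lemma sum_range_tent_sub_eq_one {N : ℕ} {y : ℝ} (h0 : 0 ≤ y) (hN : y ≤ N) :
    ∑ j ∈ range (N + 1), tent (y - j) = 1 := by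
  set ramp : ℝ → ℝ := fun z => max 0 (z + 1) - max 0 z
  have htent : ∀ j : ℕ, tent (y - j) = ramp (y - j) - ramp (y - ↑(j + 1)) := fun j => by
    simp only [tent, ramp]
    push_cast
    ring_nf
  rw [sum_congr rfl fun j _ => htent j, sum_range_sub']
  simp only [ramp, Nat.cast_zero, sub_zero, Nat.cast_succ]
  rw [max_eq_right (by linarith), max_eq_right h0, max_eq_left (by linarith),
    max_eq_left (by linarith)]
  ring

lemma exists_sum_tent_near {φ : ℝ → ℝ} (hφ : Continuous φ) (A B : ℝ) {δ : ℝ} (hδ : 0 < δ) :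
    ∃ (h : ℝ) (N : ℕ), 0 < h ∧ ∀ x ∈ Icc A B,
      |φ x - ∑ j ∈ range (N + 1), φ (A + j * h) * tent ((x - A) / h - j)| ≤ δ := by
  obtain ⟨δ₀, hδ₀, hφδ₀⟩ := Metric.uniformContinuousOn_iff.1
    ((isCompact_Icc (a := A) (b := B + 1)).uniformContinuousOn_of_continuous hφ.continuousOn) δ hδ
  -- `h ≤ 1` keeps every node within distance `h` of `[A, B]` inside `[A, B + 1]`
  set h := min δ₀ 1
  have hh : 0 < h := lt_min hδ₀ one_pos
  refine ⟨h, ⌈(B - A) / h⌉₊, hh, fun x hx => ?_⟩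
  set y := (x - A) / h
  set N := ⌈(B - A) / h⌉₊
  have hy0 : 0 ≤ y := div_nonneg (by linarith [hx.1]) hh.le
  have hyN : y ≤ N :=
    (div_le_div_of_nonneg_right (by linarith [hx.2]) hh.le).trans (Nat.le_ceil _)
  have hterm : ∀ j : ℕ, |φ x - φ (A + j * h)| * tent (y - j) ≤ δ * tent (y - j) := by
    intro j
    by_cases hj : |y - j| < 1
    · have hdist : |x - (A + j * h)| < h := by
        rw [show x - (A + j * h) = h * (y - j) by simp only [y]; field_simp; ring, abs_mul,
          abs_of_pos hh]
        exact mul_lt_of_lt_one_right hh hj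
      rw [abs_lt] at hdist
      gcongr
      · exact tent_nonneg _
      refine (hφδ₀ x ⟨hx.1, ?_⟩ _ ⟨?_, ?_⟩ ?_).le
      · linarith [hx.2]
      · nlinarith [(Nat.cast_nonneg j : (0 : ℝ) ≤ j)]
      · linarith [hx.2, min_le_right δ₀ 1]
      · rw [Real.dist_eq, abs_lt]
        constructor <;> linarith [min_le_left δ₀ 1]
    · rw [tent_eq_zero_of_one_le_abs (not_lt.1 hj), mul_zero, mul_zero]
  calc |φ x - ∑ j ∈ range (N + 1), φ (A + j * h) * tent (y - j)|
      = |∑ j ∈ range (N + 1), (φ x - φ (A + j * h)) * tent (y - j)| := by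
        rw [sum_congr rfl fun j _ => sub_mul _ _ _, sum_sub_distrib, ← mul_sum,
          sum_range_tent_sub_eq_one hy0 hyN, mul_one]
    _ ≤ ∑ j ∈ range (N + 1), |φ x - φ (A + j * h)| * tent (y - j) := by
        simpa only [abs_mul, abs_of_nonneg (tent_nonneg _)] using abs_sum_le_sum_abs
          (fun j : ℕ => (φ x - φ (A + j * h)) * tent (y - j)) (range (N + 1))
    _ ≤ ∑ j ∈ range (N + 1), δ * tent (y - j) := sum_le_sum fun j _ => hterm j
    _ = δ := by rw [← mul_sum, sum_range_tent_sub_eq_one hy0 hyN, mul_one]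

section ReluNet

variable {n : ℕ}

local notation "E" => EuclideanSpace ℝ (Fin n)

def IsReluNet (f : E → ℝ) : Prop :=
  ∃ (m : ℕ) (a b : Fin m → ℝ) (w : Fin m → E), f = reluNet a b w

lemma reluNet_append {m m' : ℕ} (a b : Fin m → ℝ) (w : Fin m → E) (a' b' : Fin m' → ℝ)
    (w' : Fin m' → E) (t : E) :
    reluNet (Fin.append a a') (Fin.append b b') (Fin.append w w') t =
      reluNet a b w t + reluNet a' b' w' t := by
  simp only [reluNet, Fin.sum_univ_add, Fin.append_left, Fin.append_right]

lemma isReluNet_zero : IsReluNet fun _ : E => (0 : ℝ) :=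
  ⟨0, 0, 0, 0, by funext t; simp [reluNet]⟩

lemma isReluNet_relu (c b : ℝ) (w : E) : IsReluNet fun t => max 0 (c * ⟪w, t⟫ + b) :=
  ⟨1, 1, fun _ => b, fun _ => c • w, by funext t; simp [reluNet, real_inner_smul_left]⟩

lemma IsReluNet.add {f g : E → ℝ} (hf : IsReluNet f) (hg : IsReluNet g) :
    IsReluNet fun t => f t + g t := by
  obtain ⟨m, a, b, w, rfl⟩ := hf
  obtain ⟨m', a', b', w', rfl⟩ := hg
  exact ⟨m + m', _, _, _, (funext (reluNet_append a b w a' b' w')).symm⟩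

lemma IsReluNet.const_mul {f : E → ℝ} (hf : IsReluNet f) (r : ℝ) :
    IsReluNet fun t => r * f t := by
  obtain ⟨m, a, b, w, rfl⟩ := hf
  exact ⟨m, r • a, b, w, by funext t; simp [reluNet, mul_sum, mul_assoc]⟩

lemma isReluNet_sum {ι : Type*} (s : Finset ι) {f : ι → E → ℝ} (hf : ∀ i ∈ s, IsReluNet (f i)) :
    IsReluNet fun t => ∑ i ∈ s, f i t := by
  classical
  induction s using Finset.induction_on with
  | empty => simpa using isReluNet_zero
  | insert i s hi ih =>
    simp only [sum_insert hi]
    exact (hf i (mem_insert_self i s)).add (ih fun j hj => hf j (mem_insert_of_mem hj))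

lemma isReluNet_tent (c b : ℝ) (w : E) : IsReluNet fun t => tent (c * ⟪w, t⟫ + b) := by
  have h := ((isReluNet_relu c (b + 1) w).add ((isReluNet_relu c b w).const_mul (-2))).add
    (isReluNet_relu c (b - 1) w)
  convert h using 2 with t
  simp only [tent]
  ring_nf

lemma IsReluNet.eventually_eq {f : E → ℝ} (hf : IsReluNet f) :
    ∀ᶠ m in atTop, ∃ (a b : Fin m → ℝ) (w : Fin m → E), f = reluNet a b w := by
  obtain ⟨m₀, a, b, w, rfl⟩ := hf
  filter_upwards [eventually_ge_atTop m₀] with m hm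
  obtain ⟨k, rfl⟩ := Nat.exists_eq_add_of_le hm
  refine ⟨Fin.append a 0, Fin.append b 0, Fin.append w 0, funext fun t => ?_⟩
  rw [reluNet_append]
  simp [reluNet]

lemma eventually_exists_reluNet_near_comp_inner {X : Set E} (hX : Bornology.IsBounded X)
    (w : E) {φ : ℝ → ℝ} (hφ : Continuous φ) {δ : ℝ} (hδ : 0 < δ) :
    ∀ᶠ m in atTop, ∃ (a b : Fin m → ℝ) (W : Fin m → E),
      ∀ t ∈ X, |φ ⟪w, t⟫ - reluNet a b W t| ≤ δ := by
  obtain ⟨R, hR⟩ := hX.exists_norm_le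
  obtain ⟨h, N, hh, happrox⟩ := exists_sum_tent_near hφ (-(‖w‖ * R)) (‖w‖ * R) hδ
  have hnet : IsReluNet fun t => ∑ j ∈ range (N + 1),
      φ (-(‖w‖ * R) + j * h) * tent ((⟪w, t⟫ - -(‖w‖ * R)) / h - j) := by
    refine isReluNet_sum _ fun j _ => IsReluNet.const_mul ?_ _
    convert isReluNet_tent h⁻¹ (‖w‖ * R / h - j) w using 3
    ring
  filter_upwards [hnet.eventually_eq] with m ⟨a, b, W, hW⟩
  refine ⟨a, b, W, fun t ht => ?_⟩
  rw [← hW]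
  refine happrox _ (abs_le.1 ?_)
  exact (abs_real_inner_le_norm w t).trans (mul_le_mul_of_nonneg_left (hR t ht) (norm_nonneg w))

end ReluNet

lemma abs_mul_sub_mul_le {a b a' b' C δ : ℝ} (ha : |a| ≤ C) (hb : |b| ≤ C) (ha' : |a - a'| ≤ δ)
    (hb' : |b - b'| ≤ δ) (hδ : δ ≤ 1) : |a * b - a' * b'| ≤ (2 * C + 1) * δ := by
  have hC : 0 ≤ C := (abs_nonneg a).trans ha
  have hδ0 : 0 ≤ δ := (abs_nonneg _).trans ha'
  calc |a * b - a' * b'| = |(a - a') * b + a * (b - b') - (a - a') * (b - b')| := by ring_nf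
    _ ≤ |a - a'| * |b| + |a| * |b - b'| + |a - a'| * |b - b'| := by
        refine (abs_sub _ _).trans ?_
        rw [← abs_mul, ← abs_mul, ← abs_mul]
        gcongr
        exact abs_add_le _ _
    _ ≤ δ * C + C * δ + δ * δ := by gcongr
    _ ≤ (2 * C + 1) * δ := by nlinarith

lemma exists_sum_reluNet_mul_near {dt ds d : ℕ} {X : Set (EuclideanSpace ℝ (Fin dt))}
    {Y : Set (EuclideanSpace ℝ (Fin ds))} (hX : IsCompact X) (hY : IsCompact Y)
    {φ ψ : Fin d → ℝ → ℝ} (hφ : ∀ ℓ, Continuous (φ ℓ)) (hψ : ∀ ℓ, Continuous (ψ ℓ))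
    (w : Fin d → EuclideanSpace ℝ (Fin dt)) (v : Fin d → EuclideanSpace ℝ (Fin ds))
    {δ : ℝ} (hδ : 0 < δ) :
    ∃ m : ℕ, 0 < m ∧
      ∃ (aq bq : Fin d → Fin m → ℝ) (wq : Fin d → Fin m → EuclideanSpace ℝ (Fin dt))
        (ak bk : Fin d → Fin m → ℝ) (wk : Fin d → Fin m → EuclideanSpace ℝ (Fin ds)),
        ∀ t ∈ X, ∀ s ∈ Y,
          |∑ ℓ, φ ℓ ⟪w ℓ, t⟫ * ψ ℓ ⟪v ℓ, s⟫ -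
            ∑ ℓ, reluNet (aq ℓ) (bq ℓ) (wq ℓ) t * reluNet (ak ℓ) (bk ℓ) (wk ℓ) s| ≤ δ := by
  obtain ⟨Cq, hCq⟩ := hX.exists_bound_of_continuousOn (f := fun t ℓ => φ ℓ ⟪w ℓ, t⟫)
    (continuous_pi fun ℓ => (hφ ℓ).comp (continuous_const.inner continuous_id)).continuousOn
  obtain ⟨Ck, hCk⟩ := hY.exists_bound_of_continuousOn (f := fun s ℓ => ψ ℓ ⟪v ℓ, s⟫)
    (continuous_pi fun ℓ => (hψ ℓ).comp (continuous_const.inner continuous_id)).continuousOn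
  set C := max (max Cq Ck) 0
  have hq_le : ∀ ℓ, ∀ t ∈ X, |φ ℓ ⟪w ℓ, t⟫| ≤ C := fun ℓ t ht =>
    ((norm_le_pi_norm (fun ℓ => φ ℓ ⟪w ℓ, t⟫) ℓ).trans (hCq t ht)).trans
      ((le_max_left _ _).trans (le_max_left _ _))
  have hk_le : ∀ ℓ, ∀ s ∈ Y, |ψ ℓ ⟪v ℓ, s⟫| ≤ C := fun ℓ s hs =>
    ((norm_le_pi_norm (fun ℓ => ψ ℓ ⟪v ℓ, s⟫) ℓ).trans (hCk s hs)).trans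
      ((le_max_right _ _).trans (le_max_left _ _))
  obtain ⟨δ₀, hδ₀, hδ₀δ⟩ := exists_pos_mul_lt hδ (d * (2 * C + 1))
  have hδ' : 0 < min δ₀ 1 := lt_min hδ₀ one_pos
  obtain ⟨m, hm, hq, hk⟩ := ((eventually_gt_atTop 0).and
    ((eventually_all.2 fun ℓ => eventually_exists_reluNet_near_comp_inner hX.isBounded (w ℓ)
      (hφ ℓ) hδ').and
    (eventually_all.2 fun ℓ => eventually_exists_reluNet_near_comp_inner hY.isBounded (v ℓ)
      (hψ ℓ) hδ'))).exists
  choose aq bq wq hq using hq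
  choose ak bk wk hk using hk
  refine ⟨m, hm, aq, bq, wq, ak, bk, wk, fun t ht s hs => ?_⟩
  calc _ ≤ ∑ ℓ, |φ ℓ ⟪w ℓ, t⟫ * ψ ℓ ⟪v ℓ, s⟫ -
          reluNet (aq ℓ) (bq ℓ) (wq ℓ) t * reluNet (ak ℓ) (bk ℓ) (wk ℓ) s| := by
        rw [← sum_sub_distrib]
        exact abs_sum_le_sum_abs _ _
    _ ≤ ∑ _ℓ : Fin d, (2 * C + 1) * min δ₀ 1 := sum_le_sum fun ℓ _ =>
        abs_mul_sub_mul_le (hq_le ℓ t ht) (hk_le ℓ s hs) (hq ℓ t ht) (hk ℓ s hs) (min_le_right _ _)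
    _ = d * (2 * C + 1) * min δ₀ 1 := by simp [mul_assoc]
    _ ≤ d * (2 * C + 1) * δ₀ := by gcongr; exact min_le_left _ _
    _ ≤ δ := hδ₀δ.le

section ExpSums

variable {E F : Type*} [NormedAddCommGroup E] [InnerProductSpace ℝ E]
  [NormedAddCommGroup F] [InnerProductSpace ℝ F]

noncomputable def expInnerSubmonoid (K : Set (E × F)) : Submonoid C(K, ℝ) where
  carrier := range fun wv : E × F =>
    ⟨fun p => Real.exp (⟪wv.1, p.1.1⟫ + ⟪wv.2, p.1.2⟫), by fun_prop⟩
  mul_mem' := by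
    rintro _ _ ⟨a, rfl⟩ ⟨b, rfl⟩
    refine ⟨a + b, ?_⟩
    ext p
    simp only [Prod.fst_add, Prod.snd_add, inner_add_left, ContinuousMap.coe_mk,
      ContinuousMap.mul_apply, ← Real.exp_add]
    ring_nf
  one_mem' := ⟨0, by ext; simp⟩

lemma inner_sub_sub_inner_sub_eq_norm_sq (x y : E) : ⟪x - y, x⟫ - ⟪x - y, y⟫ = ‖x - y‖ ^ 2 := by
  rw [← inner_sub_right, real_inner_self_eq_norm_sq]

lemma separatesPoints_adjoin_expInnerSubmonoid (K : Set (E × F)) :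
    (Algebra.adjoin ℝ (expInnerSubmonoid K : Set C(K, ℝ))).SeparatesPoints := by
  rintro ⟨⟨x, y⟩, hp⟩ ⟨⟨x', y'⟩, hq⟩ hpq
  refine ⟨_, ⟨_, Algebra.subset_adjoin ⟨(x - x', y - y'), rfl⟩, rfl⟩, fun h => hpq ?_⟩
  have hexp := Real.exp_injective h
  have hx := inner_sub_sub_inner_sub_eq_norm_sq x x'
  have hy := inner_sub_sub_inner_sub_eq_norm_sq y y'
  have hsq : ‖x - x'‖ ^ 2 + ‖y - y'‖ ^ 2 = 0 := by simp only at hexp; linarith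
  rw [add_eq_zero_iff_of_nonneg (sq_nonneg _) (sq_nonneg _), sq_eq_zero_iff, sq_eq_zero_iff,
    norm_sub_eq_zero_iff, norm_sub_eq_zero_iff] at hsq
  simp [hsq.1, hsq.2]

lemma exists_sum_exp_inner_near {K : Set (E × F)} (hK : IsCompact K) {f : E × F → ℝ}
    (hf : ContinuousOn f K) {η : ℝ} (hη : 0 < η) :
    ∃ (n : ℕ) (c : Fin n → ℝ) (w : Fin n → E) (v : Fin n → F),
      ∀ p ∈ K, |f p - ∑ i, c i * Real.exp (⟪w i, p.1⟫ + ⟪v i, p.2⟫)| < η := by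
  have := isCompact_iff_compactSpace.mp hK
  obtain ⟨g, hg⟩ := ContinuousMap.exists_mem_subalgebra_near_continuous_of_separatesPoints _
    (separatesPoints_adjoin_expInnerSubmonoid K) (K.domRestrict f) hf.domRestrict η hη
  have hspan : (g : C(K, ℝ)) ∈ Submodule.span ℝ (expInnerSubmonoid K : Set C(K, ℝ)) := by
    have hg := (Subalgebra.mem_toSubmodule _).2 g.2
    rwa [Algebra.adjoin_eq_span, Submonoid.closure_eq] at hg
  obtain ⟨n, c, e, he⟩ := Submodule.mem_span_set'.1 hspan
  choose wv hwv using fun i => (e i).2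
  refine ⟨n, c, fun i => (wv i).1, fun i => (wv i).2, fun p hp => ?_⟩
  rw [abs_sub_comm, ← Real.norm_eq_abs]
  convert hg ⟨p, hp⟩ using 2
  rw [← he, ContinuousMap.sum_apply]
  congr 1
  refine sum_congr rfl fun i _ => ?_
  rw [ContinuousMap.smul_apply, ← hwv i, smul_eq_mul]
  rfl

end ExpSums

lemma IsCompact.exists_pos_forall_abs_comp_sub_lt {α : Type*} [TopologicalSpace α] {K : Set α}
    (hK : IsCompact K) {f : α → ℝ} (hf : ContinuousOn f K) {g : ℝ → ℝ} (hg : Continuous g)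
    {ε : ℝ} (hε : 0 < ε) :
    ∃ η > 0, ∀ p ∈ K, ∀ u : ℝ, |f p - u| ≤ η → |g (f p) - g u| < ε := by
  obtain ⟨M, hM⟩ := hK.exists_bound_of_continuousOn hf
  obtain ⟨δ, hδ, hgδ⟩ := Metric.uniformContinuousOn_iff.1
    ((isCompact_Icc (a := -M - 1) (b := M + 1)).uniformContinuousOn_of_continuous
      hg.continuousOn) ε hε
  refine ⟨min 1 (δ / 2), by positivity, fun p hp u hu => ?_⟩
  have hfp := abs_le.1 (hM p hp)
  have hu' := abs_le.1 (hu.trans (min_le_left _ _))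
  have hu'' := abs_le.1 (hu.trans (min_le_right _ _))
  rw [← Real.dist_eq]
  refine hgδ _ ⟨by linarith, by linarith⟩ _ ⟨by linarith, by linarith⟩ ?_
  rw [Real.dist_eq, abs_lt]
  constructor <;> linarith

lemma exists_sum_reluNet_mul_div_sqrt_near {dt ds : ℕ} {X : Set (EuclideanSpace ℝ (Fin dt))}
    {Y : Set (EuclideanSpace ℝ (Fin ds))} (hX : IsCompact X) (hY : IsCompact Y)
    {f : EuclideanSpace ℝ (Fin dt) × EuclideanSpace ℝ (Fin ds) → ℝ} (hf : ContinuousOn f (X ×ˢ Y))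
    {η : ℝ} (hη : 0 < η) :
    ∃ d m : ℕ, 0 < d ∧ 0 < m ∧
      ∃ (aq bq : Fin d → Fin m → ℝ) (wq : Fin d → Fin m → EuclideanSpace ℝ (Fin dt))
        (ak bk : Fin d → Fin m → ℝ) (wk : Fin d → Fin m → EuclideanSpace ℝ (Fin ds)),
        ∀ t ∈ X, ∀ s ∈ Y,
          |f (t, s) - (∑ ℓ, reluNet (aq ℓ) (bq ℓ) (wq ℓ) t * reluNet (ak ℓ) (bk ℓ) (wk ℓ) s)
            / √d| ≤ η := by
  obtain ⟨n, c, w, v, hexp⟩ := exists_sum_exp_inner_near (hX.prod hY) hf (half_pos hη)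
  -- a zero term in front makes `d = n + 1` positive
  set d := n + 1
  have hd : 0 < √(d : ℝ) := Real.sqrt_pos.2 (by positivity)
  obtain ⟨m, hm, aq, bq, wq, ak, bk, wk, hnet⟩ := exists_sum_reluNet_mul_near hX hY
    (φ := fun ℓ x => √d * (Fin.cons 0 c : Fin d → ℝ) ℓ * Real.exp x) (ψ := fun _ => Real.exp)
    (by fun_prop) (fun _ => Real.continuous_exp) (Fin.cons 0 w) (Fin.cons 0 v)
    (mul_pos hd (half_pos hη))
  refine ⟨d, m, n.succ_pos, hm, aq, bq, wq, ak, bk, wk, fun t ht s hs => ?_⟩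
  set S := ∑ i, c i * Real.exp (⟪w i, t⟫ + ⟪v i, s⟫)
  set T := ∑ ℓ, reluNet (aq ℓ) (bq ℓ) (wq ℓ) t * reluNet (ak ℓ) (bk ℓ) (wk ℓ) s
  have hST : |√d * S - T| ≤ √d * (η / 2) := by
    convert hnet t ht s hs using 3
    simp [S, Fin.sum_univ_succ, mul_sum, Real.exp_add, mul_assoc]
  calc |f (t, s) - T / √d| ≤ |f (t, s) - S| + |S - T / √d| := abs_sub_le _ _ _
    _ ≤ η / 2 + η / 2 := by
        gcongr
        · exact (hexp (t, s) ⟨ht, hs⟩).le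
        · rwa [show S - T / √d = (√d * S - T) / √d by field_simp, abs_div, abs_of_pos hd,
            div_le_iff₀' hd]
    _ = η := add_halves η

theorem stmt_4 (dt ds : ℕ)
    (X : Set (EuclideanSpace ℝ (Fin dt))) (Y : Set (EuclideanSpace ℝ (Fin ds)))
    (hX : IsCompact X) (hY : IsCompact Y)
    (F : EuclideanSpace ℝ (Fin dt) × EuclideanSpace ℝ (Fin ds) → ℝ)
    (hF : ContinuousOn F (X ×ˢ Y))
    (hFpos : ∀ t ∈ X, ∀ s ∈ Y, 0 < F (t, s))
    (ε : ℝ) (hε : 0 < ε) :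
    ∃ d m : ℕ, 0 < d ∧ 0 < m ∧
      ∃ (aq bq : Fin d → Fin m → ℝ) (wq : Fin d → Fin m → EuclideanSpace ℝ (Fin dt))
        (ak bk : Fin d → Fin m → ℝ) (wk : Fin d → Fin m → EuclideanSpace ℝ (Fin ds)),
        ∀ t ∈ X, ∀ s ∈ Y,
          |F (t, s) -
            Real.exp ((∑ ℓ, reluNet (aq ℓ) (bq ℓ) (wq ℓ) t * reluNet (ak ℓ) (bk ℓ) (wk ℓ) s)
              / Real.sqrt d)| < ε := by
  have hlog : ContinuousOn (fun p => Real.log (F p)) (X ×ˢ Y) :=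
    hF.log fun p hp => (hFpos p.1 hp.1 p.2 hp.2).ne'
  obtain ⟨η, hη, hexp⟩ :=
    (hX.prod hY).exists_pos_forall_abs_comp_sub_lt hlog Real.continuous_exp hε
  obtain ⟨d, m, hd, hm, aq, bq, wq, ak, bk, wk, hnear⟩ :=
    exists_sum_reluNet_mul_div_sqrt_near hX hY hlog hη
  refine ⟨d, m, hd, hm, aq, bq, wq, ak, bk, wk, fun t ht s hs => ?_⟩
  simpa only [Real.exp_log (hFpos t ht s hs)] using
    hexp (t, s) ⟨ht, hs⟩ _ (hnear t ht s hs)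
end

section
/- Let d be a positive integer and q, k ∈ ℝ^d. Then the family indexed by multi-indices p : {1, …, d} → ℕ given by (∏_{ℓ=1}^{d} q_ℓ^{p_ℓ}/√(p_ℓ!)) · (∏_{ℓ=1}^{d} k_ℓ^{p_ℓ}/√(p_ℓ!)) is (unconditionally) summable, and its sum equals exp(⟨q, k⟩), where ⟨q, k⟩ = Σ_{ℓ=1}^{d} q_ℓ k_ℓ. -/
/-!
The square roots of the factorials pair up, `Φ(q)_p Φ(k)_p = ∏ ℓ, (q ℓ * k ℓ) ^ p ℓ / (p ℓ)!`,
so the family is the termwise expansion of the product over `ℓ` of the exponential series of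
`q ℓ * k ℓ`. These series converge absolutely, and a finite product of absolutely convergent
series may be expanded over multi-indices, so the sum is `∏ ℓ, exp (q ℓ * k ℓ) = exp ⟨q, k⟩`.
-/

open Finset
open scoped Nat

section PiProd

variable {R κ : Type*} [NormedCommRing R]

theorem summable_norm_prod_apply_pi {d : ℕ} {f : Fin d → κ → R}
    (hf : ∀ i, Summable fun n => ‖f i n‖) :
    Summable fun p : Fin d → κ => ‖∏ i, f i (p i)‖ := by
  induction d with
  | zero => exact .of_finite
  | succ d ih =>
    have hrest := ih (f := fun i => f i.succ) fun i => hf i.succ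
    rw [← (Fin.consEquiv fun _ => κ).summable_iff]
    simpa only [Function.comp_def, Fin.prod_univ_succ, Fin.consEquiv_apply, Fin.cons_zero,
      Fin.cons_succ] using (hf 0).mul_norm hrest

theorem hasSum_prod_apply_pi [CompleteSpace R] {d : ℕ} {f : Fin d → κ → R}
    (hf : ∀ i, Summable fun n => ‖f i n‖) :
    HasSum (fun p : Fin d → κ => ∏ i, f i (p i)) (∏ i, ∑' n, f i n) := by
  induction d with
  | zero =>
    simp only [univ_eq_empty, prod_empty]
    exact hasSum_single default fun p hp => (hp (Subsingleton.elim p default)).elim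
  | succ d ih =>
    have hhead := (hf 0).of_norm.hasSum
    have htail := ih (f := fun i => f i.succ) fun i => hf i.succ
    have hprod := summable_mul_of_summable_norm (hf 0)
      (summable_norm_prod_apply_pi (f := fun i => f i.succ) fun i => hf i.succ)
    rw [Fin.prod_univ_succ, ← (Fin.consEquiv fun _ => κ).hasSum_iff]
    simpa only [Function.comp_def, Fin.prod_univ_succ, Fin.consEquiv_apply, Fin.cons_zero,
      Fin.cons_succ] using hhead.mul htail hprod

end PiProd

noncomputable def expFeature {d : ℕ} (q : Fin d → ℝ) (p : Fin d → ℕ) : ℝ :=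
  ∏ ℓ, q ℓ ^ p ℓ / √((p ℓ)! : ℝ)

theorem expFeature_mul_expFeature {d : ℕ} (q k : Fin d → ℝ) (p : Fin d → ℕ) :
    expFeature q p * expFeature k p = ∏ ℓ, (q ℓ * k ℓ) ^ p ℓ / (p ℓ)! := by
  rw [expFeature, expFeature, ← prod_mul_distrib]
  refine prod_congr rfl fun ℓ _ => ?_
  rw [div_mul_div_comm, ← mul_pow, Real.mul_self_sqrt (Nat.cast_nonneg _)]

theorem hasSum_expFeature_mul_expFeature {d : ℕ} (q k : Fin d → ℝ) :
    HasSum (fun p => expFeature q p * expFeature k p) (Real.exp (∑ ℓ, q ℓ * k ℓ)) := by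
  simp_rw [expFeature_mul_expFeature, Real.exp_sum, Real.exp_eq_exp_ℝ,
    ← (NormedSpace.expSeries_div_hasSum_exp _).tsum_eq]
  exact hasSum_prod_apply_pi (f := fun ℓ n => (q ℓ * k ℓ) ^ n / n !) fun ℓ =>
    NormedSpace.norm_expSeries_div_summable (q ℓ * k ℓ)

theorem stmt_6_general (d : ℕ) (q k : Fin d → ℝ) :
    Summable (fun p : Fin d → ℕ =>
      (∏ ℓ, q ℓ ^ p ℓ / Real.sqrt (Nat.factorial (p ℓ))) *
      (∏ ℓ, k ℓ ^ p ℓ / Real.sqrt (Nat.factorial (p ℓ)))) ∧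
    ∑' p : Fin d → ℕ,
      (∏ ℓ, q ℓ ^ p ℓ / Real.sqrt (Nat.factorial (p ℓ))) *
      (∏ ℓ, k ℓ ^ p ℓ / Real.sqrt (Nat.factorial (p ℓ)))
      = Real.exp (∑ ℓ, q ℓ * k ℓ) := by
  have h := hasSum_expFeature_mul_expFeature q k
  exact ⟨h.summable, h.tsum_eq⟩

theorem stmt_6 (d : ℕ) (hd : 0 < d) (q k : Fin d → ℝ) :
    Summable (fun p : Fin d → ℕ =>
      (∏ ℓ, q ℓ ^ p ℓ / Real.sqrt (Nat.factorial (p ℓ))) *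
      (∏ ℓ, k ℓ ^ p ℓ / Real.sqrt (Nat.factorial (p ℓ)))) ∧
    ∑' p : Fin d → ℕ,
      (∏ ℓ, q ℓ ^ p ℓ / Real.sqrt (Nat.factorial (p ℓ))) *
      (∏ ℓ, k ℓ ^ p ℓ / Real.sqrt (Nat.factorial (p ℓ)))
      = Real.exp (∑ ℓ, q ℓ * k ℓ) :=
  stmt_6_general d q k
end

section
/- Let d, d_t, d_s be positive integers, W^Q a real d × d_t matrix, W^K a real d × d_s matrix, t ∈ ℝ^{d_t} and s ∈ ℝ^{d_s}, and set q = W^Q t ∈ ℝ^d and k = W^K s ∈ ℝ^d. Then the family indexed by multi-indices p : {1, …, d} → ℕ given by (∏_{ℓ=1}^{d} (q_ℓ/d^{1/4})^{p_ℓ}/√(p_ℓ!)) · (∏_{ℓ=1}^{d} (k_ℓ/d^{1/4})^{p_ℓ}/√(p_ℓ!)) is (unconditionally) summable, and its sum equals exp(⟨W^Q t, W^K s⟩/√d), the exponentiated query-key kernel of scaled dot-product attention. -/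
/-!
Writing `a ℓ = q ℓ * k ℓ / √d`, the product of the two feature coordinates at a multi-index `p` is
`∏ ℓ, a ℓ ^ p ℓ / (p ℓ)!`, because `(d ^ (1/4)) ^ 2 = √d` and `√(n!) ^ 2 = n!`. Summing over all
multi-indices expands the finite product of the absolutely convergent exponential series
`∏ ℓ, exp (a ℓ) = exp (∑ ℓ, a ℓ)`.
-/

open Finset
open scoped Nat

section PiProd

variable {R β : Type*}

theorem prod_consEquiv_apply [CommMonoid R] {n : ℕ} (f : Fin (n + 1) → β → R)
    (z : β × (Fin n → β)) :
    ∏ i, f i (Fin.consEquiv (fun _ => β) z i) = f 0 z.1 * ∏ i : Fin n, f i.succ (z.2 i) := by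
  simp [Fin.prod_univ_succ, Fin.consEquiv]

theorem summable_norm_prod_pi [NormedCommRing R] {n : ℕ} {f : Fin n → β → R}
    (hf : ∀ i, Summable fun b => ‖f i b‖) : Summable fun p : Fin n → β => ‖∏ i, f i (p i)‖ := by
  induction n with
  | zero => exact .of_finite
  | succ n ih =>
    rw [← (Fin.consEquiv fun _ => β).summable_iff]
    simpa only [Function.comp_def, prod_consEquiv_apply] using
      (hf 0).mul_norm (ih fun i => hf i.succ)

theorem hasSum_prod_pi [NormedCommRing R] [CompleteSpace R] {n : ℕ} {f : Fin n → β → R}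
    (hf : ∀ i, Summable fun b => ‖f i b‖) :
    HasSum (fun p : Fin n → β => ∏ i, f i (p i)) (∏ i, ∑' b, f i b) := by
  induction n with
  | zero => simp
  | succ n ih =>
    rw [← (Fin.consEquiv fun _ => β).hasSum_iff, Fin.prod_univ_succ]
    have htail : ∀ i : Fin n, Summable fun b => ‖f i.succ b‖ := fun i => hf i.succ
    have hhead : HasSum (f 0) (∑' b, f 0 b) := (hf 0).of_norm.hasSum
    simpa only [Function.comp_def, prod_consEquiv_apply] using
      hhead.mul (ih htail) (summable_mul_of_summable_norm (hf 0) (summable_norm_prod_pi htail) :)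

end PiProd

theorem hasSum_prod_pow_div_factorial {n : ℕ} (a : Fin n → ℝ) :
    HasSum (fun p : Fin n → ℕ => ∏ i, a i ^ p i / (p i)!) (Real.exp (∑ i, a i)) := by
  have h := hasSum_prod_pi (f := fun i m => a i ^ m / (m ! : ℝ)) fun i => by
    simpa [abs_div, abs_pow] using Real.summable_pow_div_factorial |a i|
  simpa only [fun i => (NormedSpace.expSeries_div_hasSum_exp (a i)).tsum_eq, ← Real.exp_eq_exp_ℝ,
    Real.exp_sum] using h

theorem feature_mul_feature (x y c : ℝ) (n : ℕ) :
    (x / c) ^ n / Real.sqrt n ! * ((y / c) ^ n / Real.sqrt n !) = (x * y / (c * c)) ^ n / n ! := by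
  rw [div_mul_div_comm, ← mul_pow, div_mul_div_comm, Real.mul_self_sqrt (Nat.cast_nonneg _)]

theorem rpow_quarter_mul_self {x : ℝ} (hx : 0 ≤ x) :
    x ^ ((1 : ℝ) / 4) * x ^ ((1 : ℝ) / 4) = √x := by
  rw [← Real.rpow_add' hx (by norm_num), Real.sqrt_eq_rpow]
  norm_num

theorem stmt_7_general (d dt ds : ℕ)
    (WQ : Matrix (Fin d) (Fin dt) ℝ) (WK : Matrix (Fin d) (Fin ds) ℝ)
    (t : Fin dt → ℝ) (s : Fin ds → ℝ) :
    Summable (fun p : Fin d → ℕ =>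
      (∏ ℓ, (WQ.mulVec t ℓ / (d : ℝ) ^ ((1 : ℝ) / 4)) ^ p ℓ / Real.sqrt (Nat.factorial (p ℓ))) *
      (∏ ℓ, (WK.mulVec s ℓ / (d : ℝ) ^ ((1 : ℝ) / 4)) ^ p ℓ / Real.sqrt (Nat.factorial (p ℓ)))) ∧
    ∑' p : Fin d → ℕ,
      (∏ ℓ, (WQ.mulVec t ℓ / (d : ℝ) ^ ((1 : ℝ) / 4)) ^ p ℓ / Real.sqrt (Nat.factorial (p ℓ))) *
      (∏ ℓ, (WK.mulVec s ℓ / (d : ℝ) ^ ((1 : ℝ) / 4)) ^ p ℓ / Real.sqrt (Nat.factorial (p ℓ)))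
      = Real.exp ((∑ ℓ, WQ.mulVec t ℓ * WK.mulVec s ℓ) / Real.sqrt d) := by
  have h := hasSum_prod_pow_div_factorial fun ℓ =>
    WQ.mulVec t ℓ * WK.mulVec s ℓ / ((d : ℝ) ^ ((1 : ℝ) / 4) * (d : ℝ) ^ ((1 : ℝ) / 4))
  simp only [← feature_mul_feature, prod_mul_distrib, ← sum_div] at h
  rw [rpow_quarter_mul_self (Nat.cast_nonneg d)] at h
  exact ⟨h.summable, h.tsum_eq⟩

theorem stmt_7 (d dt ds : ℕ) (hd : 0 < d) (hdt : 0 < dt) (hds : 0 < ds)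
    (WQ : Matrix (Fin d) (Fin dt) ℝ) (WK : Matrix (Fin d) (Fin ds) ℝ)
    (t : Fin dt → ℝ) (s : Fin ds → ℝ) :
    Summable (fun p : Fin d → ℕ =>
      (∏ ℓ, (WQ.mulVec t ℓ / (d : ℝ) ^ ((1 : ℝ) / 4)) ^ p ℓ / Real.sqrt (Nat.factorial (p ℓ))) *
      (∏ ℓ, (WK.mulVec s ℓ / (d : ℝ) ^ ((1 : ℝ) / 4)) ^ p ℓ / Real.sqrt (Nat.factorial (p ℓ)))) ∧
    ∑' p : Fin d → ℕ,
      (∏ ℓ, (WQ.mulVec t ℓ / (d : ℝ) ^ ((1 : ℝ) / 4)) ^ p ℓ / Real.sqrt (Nat.factorial (p ℓ))) *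
      (∏ ℓ, (WK.mulVec s ℓ / (d : ℝ) ^ ((1 : ℝ) / 4)) ^ p ℓ / Real.sqrt (Nat.factorial (p ℓ)))
      = Real.exp ((∑ ℓ, WQ.mulVec t ℓ * WK.mulVec s ℓ) / Real.sqrt d) :=
  stmt_7_general d dt ds WQ WK t s
end

section
/- Let d be a positive integer and q ∈ ℝ^d. Then the family indexed by multi-indices p : {1, …, d} → ℕ given by (∏_{ℓ=1}^{d} q_ℓ^{p_ℓ}/√(p_ℓ!))² is summable, and its sum equals exp(‖q‖²), where ‖q‖² = Σ_{ℓ=1}^{d} q_ℓ². In particular, the exponential feature vector Φ(q) = (∏_{ℓ=1}^{d} q_ℓ^{p_ℓ}/√(p_ℓ!))_{p} is an element of the space ℓ² of square-summable families indexed by multi-indices. -/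
/-! Squaring turns each coordinate factor into the Taylor term `(q_ℓ²)^n / n!`, so the sum over
multi-indices is a product of `d` exponential series; for nonnegative terms such a sum over
`Fin d → ℕ` factorises, one coordinate at a time, into the product of the sums. -/

open Finset
open scoped Nat

theorem hasSum_pi_prod_of_nonneg {α : Type*} {n : ℕ} {g : Fin n → α → ℝ} {s : Fin n → ℝ}
    (hg : ∀ i, 0 ≤ g i) (hs : ∀ i, HasSum (g i) (s i)) :
    HasSum (fun p : Fin n → α => ∏ i, g i (p i)) (∏ i, s i) := by
  induction n with
  | zero => simp
  | succ n ih =>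
    have htail := ih (fun i => hg i.succ) fun i => hs i.succ
    have htail_nonneg : 0 ≤ fun p : Fin n → α => ∏ i, g i.succ (p i) :=
      fun p => prod_nonneg fun i _ => hg i.succ (p i)
    have hsummable := (hs 0).summable.mul_of_nonneg htail.summable (hg 0) htail_nonneg
    have hprod := (hs 0).mul htail hsummable
    rw [Fin.prod_univ_succ, ← (Fin.consEquiv fun _ => α).hasSum_iff]
    refine hprod.congr_fun fun x => ?_
    simp only [Function.comp_apply, Fin.consEquiv_apply, Fin.prod_univ_succ, Fin.cons_zero,
      Fin.cons_succ]

theorem hasSum_sq_pow_div_sqrt_factorial (x : ℝ) :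
    HasSum (fun n => (x ^ n / √(n ! : ℝ)) ^ 2) (Real.exp (x ^ 2)) := by
  have hexp := NormedSpace.expSeries_div_hasSum_exp (x ^ 2)
  rw [← Real.exp_eq_exp_ℝ] at hexp
  refine hexp.congr_fun fun n => ?_
  rw [div_pow, Real.sq_sqrt n.factorial.cast_nonneg, ← pow_mul, mul_comm, pow_mul]

theorem hasSum_sq_prod_pow_div_sqrt_factorial {d : ℕ} (q : Fin d → ℝ) :
    HasSum (fun p : Fin d → ℕ => (∏ ℓ, q ℓ ^ p ℓ / √((p ℓ)! : ℝ)) ^ 2)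
      (Real.exp (∑ ℓ, q ℓ ^ 2)) := by
  simp_rw [← prod_pow]
  rw [Real.exp_sum]
  exact hasSum_pi_prod_of_nonneg (g := fun ℓ n => (q ℓ ^ n / √(n ! : ℝ)) ^ 2)
    (fun _ _ => sq_nonneg _)
    fun ℓ => hasSum_sq_pow_div_sqrt_factorial (q ℓ)

theorem stmt_8_general (d : ℕ) (q : Fin d → ℝ) :
    Summable (fun p : Fin d → ℕ =>
      (∏ ℓ, q ℓ ^ p ℓ / Real.sqrt (Nat.factorial (p ℓ))) ^ 2) ∧
    (∑' p : Fin d → ℕ, (∏ ℓ, q ℓ ^ p ℓ / Real.sqrt (Nat.factorial (p ℓ))) ^ 2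
      = Real.exp (∑ ℓ, q ℓ ^ 2)) ∧
    Memℓp (fun p : Fin d → ℕ => ∏ ℓ, q ℓ ^ p ℓ / Real.sqrt (Nat.factorial (p ℓ))) 2 := by
  have h := hasSum_sq_prod_pow_div_sqrt_factorial q
  refine ⟨h.summable, h.tsum_eq, memℓp_gen ?_⟩
  simpa only [Real.norm_eq_abs, sq_abs, ENNReal.toReal_ofNat, Real.rpow_two] using h.summable

theorem stmt_8 (d : ℕ) (hd : 0 < d) (q : Fin d → ℝ) :
    Summable (fun p : Fin d → ℕ =>
      (∏ ℓ, q ℓ ^ p ℓ / Real.sqrt (Nat.factorial (p ℓ))) ^ 2) ∧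
    (∑' p : Fin d → ℕ, (∏ ℓ, q ℓ ^ p ℓ / Real.sqrt (Nat.factorial (p ℓ))) ^ 2
      = Real.exp (∑ ℓ, q ℓ ^ 2)) ∧
    Memℓp (fun p : Fin d → ℕ => ∏ ℓ, q ℓ ^ p ℓ / Real.sqrt (Nat.factorial (p ℓ))) 2 :=
  stmt_8_general d q
end

section
/- Let d and d_t be positive integers with d ≤ d_t, and let W^Q be a real d × d_t matrix such that the linear map t ↦ W^Q t from ℝ^{d_t} to ℝ^d is surjective (equivalently, W^Q has rank d). Let Φ : ℝ^d → ℓ²({multi-indices p : {1,…,d} → ℕ}) be the exponential feature map Φ(q)_p = ∏_{ℓ=1}^{d} q_ℓ^{p_ℓ}/√(p_ℓ!). Then the closure of the linear span of the set {Φ(W^Q t) : t ∈ ℝ^{d_t}} is all of ℓ². -/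
/-!
If `f ∈ ℓ²` is orthogonal to every `Φ q`, then `∑ₚ cₚ qᵖ = 0` for all `q`, where
`cₚ = fₚ / ∏ √(pₗ!)` (surjectivity of `W^Q` makes every `q` a query). Restricting such an
everywhere-convergent series to the lines `t ↦ t • x` and grouping by total degree gives a
one-variable power series in `t` vanishing identically, so each homogeneous part vanishes at
every `x`; a polynomial vanishing on `ℝᵈ` is zero, hence `c = 0` and `f = 0`.
-/

open Finset FormalMultilinearSeries

theorem eq_zero_of_hasSum_mul_pow_eq_zero {a : ℕ → ℝ}
    (h : ∀ t : ℝ, HasSum (fun n => a n * t ^ n) 0) : a = 0 := by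
  have hP : HasFPowerSeriesOnBall (fun _ : ℝ => (0 : ℝ)) (ofScalars ℝ a) 0 1 := by
    refine ⟨?_, one_pos, fun {y} _ => ?_⟩
    · have hs : Summable fun n => ‖ofScalars ℝ a n‖ * ((1 : NNReal) : ℝ) ^ n := by
        simpa [ofScalars_norm] using (h 1).summable.abs
      exact_mod_cast (ofScalars ℝ a).le_radius_of_summable_norm hs
    · simpa [ofScalars_apply_eq, mul_comm] using h y
  ext n
  rw [← coeff_ofScalars (p := a), hP.hasFPowerSeriesAt.eq_zero]
  exact coeff_eq_zero.2 rfl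

theorem eq_zero_of_sum_mul_prod_pow_eq_zero {σ R : Type*} [Fintype σ] [CommRing R] [IsDomain R]
    [Infinite R] {s : Finset (σ → ℕ)} {c : (σ → ℕ) → R}
    (h : ∀ x : σ → R, ∑ p ∈ s, c p * ∏ i, x i ^ p i = 0) {p : σ → ℕ} (hp : p ∈ s) :
    c p = 0 := by
  classical
  let e := (Finsupp.equivFunOnFinite : (σ →₀ ℕ) ≃ (σ → ℕ))
  let P : MvPolynomial σ R := ∑ q ∈ s, MvPolynomial.monomial (e.symm q) (c q)
  have hP : P = 0 := MvPolynomial.funext fun x => by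
    simpa [P, MvPolynomial.eval_monomial, Finsupp.prod_fintype, e] using h x
  simpa [P, MvPolynomial.coeff_sum, MvPolynomial.coeff_monomial, hp] using
    congrArg (MvPolynomial.coeff (e.symm p)) hP

theorem eq_zero_of_hasSum_mul_prod_pow_eq_zero {σ : Type*} [Fintype σ] {c : (σ → ℕ) → ℝ}
    (h : ∀ x : σ → ℝ, HasSum (fun p => c p * ∏ i, x i ^ p i) 0) : c = 0 := by
  classical
  have homogeneous :
      ∀ (x : σ → ℝ) (n : ℕ), ∑ p ∈ piAntidiag univ n, c p * ∏ i, x i ^ p i = 0 := by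
    intro x
    refine congrFun (eq_zero_of_hasSum_mul_pow_eq_zero fun t => ?_)
    -- on the fibre of total degree `n`, `(t • x) ^ p = t ^ n * x ^ p`
    have fiber : ∀ n, ∑' p : (fun p : σ → ℕ => ∑ i, p i) ⁻¹' {n},
        c p * ∏ i, (t • x) i ^ (p : σ → ℕ) i =
          (∑ p ∈ piAntidiag univ n, c p * ∏ i, x i ^ p i) * t ^ n := by
      intro n
      have hfiber : (fun p : σ → ℕ => ∑ i, p i) ⁻¹' {n} =
          ↑(piAntidiag univ n : Finset (σ → ℕ)) := by
        ext p
        simp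
      rw [hfiber, Finset.tsum_subtype' _ fun p : σ → ℕ => c p * ∏ i, (t • x) i ^ p i, sum_mul]
      refine sum_congr rfl fun p hp => ?_
      rw [mem_piAntidiag] at hp
      simp only [Pi.smul_apply, smul_eq_mul, mul_pow, prod_mul_distrib, prod_pow_eq_pow_sum, hp.1]
      ring
    simpa only [fiber] using (h (t • x)).tsum_fiberwise (fun p => ∑ i, p i)
  funext p
  exact eq_zero_of_sum_mul_prod_pow_eq_zero (homogeneous · (∑ i, p i)) (by simp)

theorem stmt_9_general (d dt : ℕ)
    (WQ : Matrix (Fin d) (Fin dt) ℝ)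
    (hW : Function.Surjective WQ.mulVec)
    (Φ : (Fin d → ℝ) → lp (fun _ : Fin d → ℕ => ℝ) 2)
    (hΦ : ∀ (q : Fin d → ℝ) (p : Fin d → ℕ),
      (Φ q : (Fin d → ℕ) → ℝ) p = ∏ ℓ, q ℓ ^ p ℓ / Real.sqrt (Nat.factorial (p ℓ))) :
    Dense (Submodule.span ℝ (Φ '' Set.range WQ.mulVec)
      : Set (lp (fun _ : Fin d → ℕ => ℝ) 2)) := by
  rw [Submodule.dense_iff_topologicalClosure_eq_top, Submodule.topologicalClosure_eq_top_iff,
    Submodule.eq_bot_iff]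
  intro f hf
  have hsqrt : ∀ p : Fin d → ℕ, ∏ ℓ, √((p ℓ).factorial : ℝ) ≠ 0 := fun p =>
    prod_ne_zero_iff.2 fun ℓ _ => by positivity
  have hc : (fun p : Fin d → ℕ => f p / ∏ ℓ, √((p ℓ).factorial : ℝ)) = 0 := by
    refine eq_zero_of_hasSum_mul_prod_pow_eq_zero fun q => ?_
    obtain ⟨t, rfl⟩ := hW q
    have horth : inner ℝ (Φ (WQ.mulVec t)) f = 0 :=
      (Submodule.mem_orthogonal _ f).1 hf _ (Submodule.subset_span ⟨_, ⟨t, rfl⟩, rfl⟩)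
    have hterm : ∀ p, inner ℝ (Φ (WQ.mulVec t) p) (f p) =
        f p / (∏ ℓ, √((p ℓ).factorial : ℝ)) * ∏ ℓ, WQ.mulVec t ℓ ^ p ℓ := fun p => by
      simp only [hΦ, prod_div_distrib, RCLike.inner_apply, map_div₀, map_prod, Real.ringHom_apply]
      ring
    simpa only [hterm, horth] using lp.hasSum_inner (𝕜 := ℝ) (Φ (WQ.mulVec t)) f
  ext p
  simpa [hsqrt p] using congrFun hc p

theorem stmt_9 (d dt : ℕ) (hd : 0 < d) (hddt : d ≤ dt)
    (WQ : Matrix (Fin d) (Fin dt) ℝ)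
    (hW : Function.Surjective WQ.mulVec)
    (Φ : (Fin d → ℝ) → lp (fun _ : Fin d → ℕ => ℝ) 2)
    (hΦ : ∀ (q : Fin d → ℝ) (p : Fin d → ℕ),
      (Φ q : (Fin d → ℕ) → ℝ) p = ∏ ℓ, q ℓ ^ p ℓ / Real.sqrt (Nat.factorial (p ℓ))) :
    Dense (Submodule.span ℝ (Φ '' Set.range WQ.mulVec)
      : Set (lp (fun _ : Fin d → ℕ => ℝ) 2)) :=
  stmt_9_general d dt WQ hW Φ hΦ
end

section
/- Let X and Y be nonempty sets, B_X and B_Y real normed vector spaces, and e_X : B_X → (X → ℝ) and e_Y : B_Y → (Y → ℝ) injective linear maps realizing their elements as real-valued functions. Fix data points x₁, …, x_{n_x} ∈ X and y₁, …, y_{n_y} ∈ Y, a loss function L : {1,…,n_x} × {1,…,n_y} × ℝ × ℝ → ℝ, strictly increasing regularization functions R_X, R_Y : [0, ∞) → ℝ, and scalars λ_X, λ_Y > 0. Define the regularized empirical risk T(f, g) = (1/(n_x n_y))·Σ_{i,j} L(i, j, (e_X f)(x_i), (e_Y g)(y_j)) + λ_X·R_X(‖f‖_{B_X}) + λ_Y·R_Y(‖g‖_{B_Y}).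 Suppose (f*, g*) minimizes T over B_X × B_Y, and suppose the norm of B_X is Gâteaux differentiable at f* with derivative the continuous linear functional D : B_X → ℝ (i.e. for every w ∈ B_X, the function t ↦ ‖f* + t·w‖_{B_X} is differentiable at t = 0 with derivative D(w)), and likewise the norm of B_Y is Gâteaux differentiable at g* with derivative D' : B_Y → ℝ. Then there exist coefficients ξ₁, …, ξ_{n_x} ∈ ℝ and ζ₁, …, ζ_{n_y} ∈ ℝ such that D(w) = Σ_{i=1}^{n_x} ξ_i·(e_X w)(x_i) for all w ∈ B_X and D'(v) = Σ_{j=1}^{n_y} ζ_j·(e_Y v)(y_j) for all v ∈ B_Y. -/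
/-!
At a minimizer `(f*, g*)`, perturbing `f*` by a direction `w` that vanishes at every `x i` leaves
the empirical risk unchanged, so minimality and strict monotonicity of `R_X` force
`‖f*‖ ≤ ‖f* + t • w‖` for all `t`. Hence `t ↦ ‖f* + t • w‖` has a minimum at `0` and `D w = 0`.
A linear form vanishing on the common kernel of finitely many linear forms is a linear
combination of them; here those forms are the evaluations `w ↦ e_X w (x i)`. Likewise for `g*`.
-/

theorem LinearMap.exists_eq_sum_mul_of_forall_eq_zero {ι 𝕜 E : Type*} [Fintype ι] [Field 𝕜]
    [AddCommGroup E] [Module 𝕜 E] (L : ι → E →ₗ[𝕜] 𝕜) (K : E →ₗ[𝕜] 𝕜)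
    (h : ∀ v, (∀ i, L i v = 0) → K v = 0) :
    ∃ c : ι → 𝕜, ∀ v, K v = ∑ i, c i * L i v := by
  have hker : ⨅ i, LinearMap.ker (L i) ≤ LinearMap.ker K := fun v hv ↦ by
    simp only [Submodule.mem_iInf, LinearMap.mem_ker] at hv ⊢
    exact h v hv
  obtain ⟨c, hc⟩ := (Submodule.mem_span_range_iff_exists_fun 𝕜).1 (mem_span_of_iInf_ker_le_ker hker)
  refine ⟨c, fun v ↦ ?_⟩
  simpa using (LinearMap.congr_fun hc v).symm

section Representer

variable {X B : Type*} [SeminormedAddCommGroup B] [NormedSpace ℝ B] {ι : Type*}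
  (e : B →ₗ[ℝ] X → ℝ) (x : ι → X)

theorem norm_le_norm_add_of_isMin_regularized (Φ : (ι → ℝ) → ℝ) {R : ℝ → ℝ}
    (hR : StrictMonoOn R (Set.Ici 0)) {lam : ℝ} (hlam : 0 < lam) {f₀ : B}
    (hmin : ∀ f, Φ (fun i ↦ e f₀ (x i)) + lam * R ‖f₀‖ ≤ Φ (fun i ↦ e f (x i)) + lam * R ‖f‖) :
    ∀ w, (∀ i, e w (x i) = 0) → ‖f₀‖ ≤ ‖f₀ + w‖ := by
  intro w hw
  have h := hmin (f₀ + w)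
  simp only [map_add, Pi.add_apply, hw, add_zero, add_le_add_iff_left] at h
  exact (hR.le_iff_le (norm_nonneg _) (norm_nonneg _)).1 (le_of_mul_le_mul_left h hlam)

theorem exists_hasDerivAt_norm_eq_sum_mul_eval [Fintype ι] {f₀ : B} (D : B →ₗ[ℝ] ℝ)
    (hD : ∀ w, HasDerivAt (fun τ : ℝ ↦ ‖f₀ + τ • w‖) (D w) 0)
    (hmin : ∀ w, (∀ i, e w (x i) = 0) → ‖f₀‖ ≤ ‖f₀ + w‖) :
    ∃ ξ : ι → ℝ, ∀ w, D w = ∑ i, ξ i * e w (x i) := by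
  refine LinearMap.exists_eq_sum_mul_of_forall_eq_zero
    (fun i ↦ (LinearMap.proj (x i)).comp e) D fun w hw ↦ ?_
  have hmin_line : IsLocalMin (fun τ : ℝ ↦ ‖f₀ + τ • w‖) 0 :=
    Filter.Eventually.of_forall fun t ↦ by
      simpa using hmin (t • w) fun i ↦ by simpa using congrArg (t * ·) (hw i)
  exact hmin_line.hasDerivAt_eq_zero (hD w)

end Representer

theorem stmt_12_general {X Y : Type*}
    {BX BY : Type*} [NormedAddCommGroup BX] [NormedSpace ℝ BX]
    [NormedAddCommGroup BY] [NormedSpace ℝ BY]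
    (eX : BX →ₗ[ℝ] X → ℝ) (eY : BY →ₗ[ℝ] Y → ℝ)
    (nx ny : ℕ) (x : Fin nx → X) (y : Fin ny → Y)
    (L : Fin nx → Fin ny → ℝ → ℝ → ℝ)
    (RX RY : ℝ → ℝ)
    (hRX : StrictMonoOn RX (Set.Ici 0)) (hRY : StrictMonoOn RY (Set.Ici 0))
    (lamX lamY : ℝ) (hlamX : 0 < lamX) (hlamY : 0 < lamY)
    (T : BX → BY → ℝ)
    (hT : ∀ (f : BX) (g : BY),
      T f g = (1 / (nx * ny) : ℝ) * ∑ i, ∑ j, L i j (eX f (x i)) (eY g (y j))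
        + lamX * RX ‖f‖ + lamY * RY ‖g‖)
    (fstar : BX) (gstar : BY)
    (hmin : ∀ (f : BX) (g : BY), T fstar gstar ≤ T f g)
    (D : BX →L[ℝ] ℝ) (D' : BY →L[ℝ] ℝ)
    (hD : ∀ w : BX, HasDerivAt (fun τ : ℝ => ‖fstar + τ • w‖) (D w) 0)
    (hD' : ∀ v : BY, HasDerivAt (fun τ : ℝ => ‖gstar + τ • v‖) (D' v) 0) :
    ∃ (ξ : Fin nx → ℝ) (ζ : Fin ny → ℝ),
      (∀ w : BX, D w = ∑ i, ξ i * eX w (x i)) ∧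
      (∀ v : BY, D' v = ∑ j, ζ j * eY v (y j)) := by
  have hminX := norm_le_norm_add_of_isMin_regularized eX x
    (fun a ↦ (1 / (nx * ny) : ℝ) * ∑ i, ∑ j, L i j (a i) (eY gstar (y j)) + lamY * RY ‖gstar‖)
    hRX hlamX fun f ↦ by linear_combination (hT fstar gstar).symm + hmin f gstar + hT f gstar
  have hminY := norm_le_norm_add_of_isMin_regularized eY y
    (fun b ↦ (1 / (nx * ny) : ℝ) * ∑ i, ∑ j, L i j (eX fstar (x i)) (b j) + lamX * RX ‖fstar‖)
    hRY hlamY fun g ↦ by linear_combination (hT fstar gstar).symm + hmin fstar g + hT fstar g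
  obtain ⟨ξ, hξ⟩ := exists_hasDerivAt_norm_eq_sum_mul_eval eX x D.toLinearMap hD hminX
  obtain ⟨ζ, hζ⟩ := exists_hasDerivAt_norm_eq_sum_mul_eval eY y D'.toLinearMap hD' hminY
  exact ⟨ξ, ζ, hξ, hζ⟩

theorem stmt_12 {X Y : Type*} [Nonempty X] [Nonempty Y]
    {BX BY : Type*} [NormedAddCommGroup BX] [NormedSpace ℝ BX]
    [NormedAddCommGroup BY] [NormedSpace ℝ BY]
    (eX : BX →ₗ[ℝ] X → ℝ) (eY : BY →ₗ[ℝ] Y → ℝ)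
    (heX : Function.Injective eX) (heY : Function.Injective eY)
    (nx ny : ℕ) (x : Fin nx → X) (y : Fin ny → Y)
    (L : Fin nx → Fin ny → ℝ → ℝ → ℝ)
    (RX RY : ℝ → ℝ)
    (hRX : StrictMonoOn RX (Set.Ici 0)) (hRY : StrictMonoOn RY (Set.Ici 0))
    (lamX lamY : ℝ) (hlamX : 0 < lamX) (hlamY : 0 < lamY)
    (T : BX → BY → ℝ)
    (hT : ∀ (f : BX) (g : BY),
      T f g = (1 / (nx * ny) : ℝ) * ∑ i, ∑ j, L i j (eX f (x i)) (eY g (y j))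
        + lamX * RX ‖f‖ + lamY * RY ‖g‖)
    (fstar : BX) (gstar : BY)
    (hmin : ∀ (f : BX) (g : BY), T fstar gstar ≤ T f g)
    (D : BX →L[ℝ] ℝ) (D' : BY →L[ℝ] ℝ)
    (hD : ∀ w : BX, HasDerivAt (fun τ : ℝ => ‖fstar + τ • w‖) (D w) 0)
    (hD' : ∀ v : BY, HasDerivAt (fun τ : ℝ => ‖gstar + τ • v‖) (D' v) 0) :
    ∃ (ξ : Fin nx → ℝ) (ζ : Fin ny → ℝ),
      (∀ w : BX, D w = ∑ i, ξ i * eX w (x i)) ∧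
      (∀ v : BY, D' v = ∑ j, ζ j * eY v (y j)) :=
  stmt_12_general eX eY nx ny x y L RX RY hRX hRY lamX lamY hlamX hlamY T hT fstar gstar hmin D D'
    hD hD'
end
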